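/- Let φ ∈ Lip_α and τ₀ ∈ C_+(Ω), and let r ∈ (0,+∞) be finite. Then system (1.1) with initial distribution (φ,τ₀) admits at most one solution (A,τ) ∈ C((−∞,r],C(Ω)) × C([0,r],C(Ω)); that is, if (A¹,τ¹) and (A²,τ²) are two solutions on [0,r] with the same initial distribution (φ,τ₀), then A¹(t,x) = A²(t,x) and τ¹(t,x) = τ²(t,x) for all t ∈ [0,r] and x ∈ Ω. -/

import Mathlib

open scoped NNReal
open MeasureTheory intervalIntegral Set

/-- The weighted history `φ_α(t) = e^{−α|t|} φ(t)`. -/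
noncomputable def weightedHist {Ω : Type*} [TopologicalSpace Ω]
    (α : ℝ) (φ : ℝ → C(Ω, ℝ)) : ℝ → C(Ω, ℝ) :=
  fun t => Real.exp (-(α * |t|)) • φ t

/-- Membership in `Lip_α`: `φ_α` is bounded and Lipschitz from `(−∞,0]` to `C(Ω)`. -/
def MemLipAlpha {Ω : Type*} [TopologicalSpace Ω] [CompactSpace Ω]
    (α : ℝ) (φ : ℝ → C(Ω, ℝ)) : Prop :=
  ContinuousOn φ (Set.Iic 0) ∧
  (∃ C : ℝ, ∀ t ≤ (0 : ℝ), ‖weightedHist α φ t‖ ≤ C) ∧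
  (∃ L : ℝ≥0, LipschitzOnWith L (weightedHist α φ) (Set.Iic 0))

/-- The norm of `Lip_α`: `‖φ_α‖_∞ + ‖φ_α‖_{Lip}`. -/
noncomputable def lipAlphaNorm {Ω : Type*} [TopologicalSpace Ω] [CompactSpace Ω]
    (α : ℝ) (φ : ℝ → C(Ω, ℝ)) : ℝ :=
  sSup {c : ℝ | ∃ t ≤ (0 : ℝ), c = ‖weightedHist α φ t‖} +
  sSup {c : ℝ | ∃ t ≤ (0 : ℝ), ∃ s ≤ (0 : ℝ), t ≠ s ∧
    c = ‖weightedHist α φ t - weightedHist α φ s‖ / |t - s|}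

/-- `F : C(Ω)² × C(Ω×Ω) → C(Ω)` is Lipschitz continuous on bounded sets. -/
def LipschitzOnBoundedSets {Ω : Type*} [TopologicalSpace Ω] [CompactSpace Ω]
    (F : C(Ω, ℝ) → C(Ω, ℝ) → C(Ω × Ω, ℝ) → C(Ω, ℝ)) : Prop :=
  ∀ M : ℝ, 0 < M → ∃ L : ℝ, 0 < L ∧
    ∀ u v : C(Ω, ℝ), ∀ w : C(Ω × Ω, ℝ), ∀ u' v' : C(Ω, ℝ), ∀ w' : C(Ω × Ω, ℝ),
      ‖u‖ ≤ M → ‖v‖ ≤ M → ‖w‖ ≤ M → ‖u'‖ ≤ M → ‖v'‖ ≤ M → ‖w'‖ ≤ M →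
      ‖F u v w - F u' v' w'‖ ≤ L * (‖u - u'‖ + ‖v - v'‖ + ‖w - w'‖)

/-- A solution of system (1.1) on [0,r] with initial distribution (φ,τ₀):
a pair of continuous maps `A : (−∞,r] → C(Ω)` and `τ : [0,r] → C₊(Ω)` such that
`A = φ` on `(−∞,0]`, `A(t,x) = φ(0,x) + ∫₀ᵗ F(A(l,·), τ(l,·), A(l−τ(l))(·,·))(x) dl`
for `t ∈ [0,r]` (where `A(l−τ(l))(x,y) = A(l−τ(l,x),y)`), and
`∫_{t−τ(t,x)}^{t} f(A(s,·))(x) ds = ∫_{−τ₀(x)}^{0} f(φ(s,·))(x) ds` on `[0,r]`. -/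
def IsSolutionOn {Ω : Type*} [TopologicalSpace Ω] [CompactSpace Ω]
    (F : C(Ω, ℝ) → C(Ω, ℝ) → C(Ω × Ω, ℝ) → C(Ω, ℝ))
    (f : C(Ω, ℝ) → C(Ω, ℝ))
    (φ : ℝ → C(Ω, ℝ)) (τ₀ : C(Ω, ℝ)) (r : ℝ)
    (A : ℝ → C(Ω, ℝ)) (τ : ℝ → C(Ω, ℝ)) : Prop :=
  ContinuousOn A (Set.Iic r) ∧
  ContinuousOn τ (Set.Icc 0 r) ∧
  (∀ t ∈ Set.Icc (0 : ℝ) r, ∀ x : Ω, 0 ≤ τ t x) ∧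
  (∀ t ≤ (0 : ℝ), A t = φ t) ∧
  (∃ w : ℝ → C(Ω × Ω, ℝ),
    (∀ l ∈ Set.Icc (0 : ℝ) r, ∀ x y : Ω, w l (x, y) = A (l - τ l x) y) ∧
    (∀ t ∈ Set.Icc (0 : ℝ) r, ∀ x : Ω,
      A t x = φ 0 x + ∫ l in (0 : ℝ)..t, F (A l) (τ l) (w l) x)) ∧
  (∀ t ∈ Set.Icc (0 : ℝ) r, ∀ x : Ω,
    (∫ s in (t - τ t x)..t, f (A s) x) = ∫ s in (-(τ₀ x))..(0 : ℝ), f (φ s) x)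

/-! Uniqueness is a Gronwall argument for `d t = ‖A₁ t - A₂ t‖`. The threshold condition pins
the delays: integrating `f ≥ m > 0` back from `t` to either delayed time gives the same value, so
`m |τ₁ - τ₂|` is bounded by the integral of `|f(A₂) - f(A₁)|`, hence by a multiple of
`sup_{[0,t]} d`. As `A₂` is Lipschitz (its history lies in `Lip_α`, and on `[0, r]` it is the
integral of a bounded function), the delayed values `A_i(l - τ_i(l,x))` differ by the same order,
and the Lipschitz bound of `F` on bounded sets gives `‖F(…₁) - F(…₂)‖ ≤ C sup_{[0,l]} d`.
Iterating, `d t ≤ K (C t)^k / k!` for every `k`, so `d = 0`, and then the delays coincide. -/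

theorem LipschitzOnBoundedSets.exists_lipschitzOnWith {Ω : Type*} [TopologicalSpace Ω]
    [CompactSpace Ω] {F : C(Ω, ℝ) → C(Ω, ℝ) → C(Ω × Ω, ℝ) → C(Ω, ℝ)}
    (hF : LipschitzOnBoundedSets F) (M : ℝ) :
    ∃ K, LipschitzOnWith K (fun p : C(Ω, ℝ) × C(Ω, ℝ) × C(Ω × Ω, ℝ) => F p.1 p.2.1 p.2.2)
      (Metric.closedBall 0 M) := by
  obtain ⟨L, hL0, hL⟩ := hF (|M| + 1) (by positivity)
  refine ⟨_, LipschitzOnWith.of_dist_le' (K := 3 * L) fun p hp q hq => ?_⟩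
  have hM : M ≤ |M| + 1 := by linarith [le_abs_self M]
  rw [mem_closedBall_zero_iff] at hp hq
  obtain ⟨hp₁, hp₂, hp₃⟩ : ‖p.1‖ ≤ |M| + 1 ∧ ‖p.2.1‖ ≤ |M| + 1 ∧ ‖p.2.2‖ ≤ |M| + 1 := by
    simpa only [norm_prod_le_iff] using hp.trans hM
  obtain ⟨hq₁, hq₂, hq₃⟩ : ‖q.1‖ ≤ |M| + 1 ∧ ‖q.2.1‖ ≤ |M| + 1 ∧ ‖q.2.2‖ ≤ |M| + 1 := by
    simpa only [norm_prod_le_iff] using hq.trans hM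
  obtain ⟨hd₁, hd₂, hd₃⟩ : ‖p.1 - q.1‖ ≤ ‖p - q‖ ∧ ‖p.2.1 - q.2.1‖ ≤ ‖p - q‖ ∧
      ‖p.2.2 - q.2.2‖ ≤ ‖p - q‖ := by
    simpa only [norm_prod_le_iff, Prod.fst_sub, Prod.snd_sub] using le_refl ‖p - q‖
  rw [dist_eq_norm, dist_eq_norm]
  calc _ ≤ L * (‖p.1 - q.1‖ + ‖p.2.1 - q.2.1‖ + ‖p.2.2 - q.2.2‖) :=
        hL _ _ _ _ _ _ hp₁ hp₂ hp₃ hq₁ hq₂ hq₃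
    _ ≤ L * (‖p - q‖ + ‖p - q‖ + ‖p - q‖) := by gcongr
    _ = 3 * L * ‖p - q‖ := by ring

theorem LipschitzOnBoundedSets.continuous {Ω : Type*} [TopologicalSpace Ω] [CompactSpace Ω]
    {F : C(Ω, ℝ) → C(Ω, ℝ) → C(Ω × Ω, ℝ) → C(Ω, ℝ)} (hF : LipschitzOnBoundedSets F) :
    Continuous fun p : C(Ω, ℝ) × C(Ω, ℝ) × C(Ω × Ω, ℝ) => F p.1 p.2.1 p.2.2 := by
  refine continuous_iff_continuousAt.2 fun p => ?_
  obtain ⟨K, hK⟩ := hF.exists_lipschitzOnWith (‖p‖ + 1)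
  exact hK.continuousOn.continuousAt (Metric.closedBall_mem_nhds_of_mem (by simp))

theorem continuousOn_of_continuousOn_uncurry {X Y Z : Type*} [TopologicalSpace X]
    [TopologicalSpace Y] [TopologicalSpace Z] {g : X → C(Y, Z)} {s : Set X}
    (hg : ContinuousOn (fun p : X × Y => g p.1 p.2) (s ×ˢ univ)) : ContinuousOn g s := by
  rw [continuousOn_iff_continuous_domRestrict]
  have hcont : Continuous fun p : s × Y => g p.1 p.2 :=
    hg.comp_continuous (continuous_subtype_val.prodMap continuous_id)
      fun p => ⟨p.1.2, mem_univ _⟩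
  exact (ContinuousMap.curry ⟨_, hcont⟩).continuous

theorem LipschitzOnWith.Icc_union_Icc {E : Type*} [PseudoMetricSpace E] {f : ℝ → E} {K : ℝ≥0}
    {a b c : ℝ} (hab : LipschitzOnWith K f (Icc a b)) (hbc : LipschitzOnWith K f (Icc b c)) :
    LipschitzOnWith K f (Icc a c) := by
  have key : ∀ x ∈ Icc a c, ∀ y ∈ Icc a c, x ≤ y → dist (f x) (f y) ≤ K * dist x y := by
    intro x hx y hy hxy
    rcases le_total y b with hyb | hby
    · exact hab.dist_le_mul x ⟨hx.1, hxy.trans hyb⟩ y ⟨hy.1, hyb⟩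
    rcases le_total b x with hbx | hxb
    · exact hbc.dist_le_mul x ⟨hbx, hx.2⟩ y ⟨hby, hy.2⟩
    calc dist (f x) (f y) ≤ dist (f x) (f b) + dist (f b) (f y) := dist_triangle _ _ _
      _ ≤ K * dist x b + K * dist b y :=
          add_le_add (hab.dist_le_mul x ⟨hx.1, hxb⟩ b ⟨hx.1.trans hxb, le_rfl⟩)
            (hbc.dist_le_mul b ⟨le_rfl, hby.trans hy.2⟩ y ⟨hby, hy.2⟩)
      _ = K * dist x y := by
          rw [Real.dist_eq, Real.dist_eq, Real.dist_eq, abs_of_nonpos (by linarith),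
            abs_of_nonpos (by linarith), abs_of_nonpos (by linarith)]
          ring
  refine LipschitzOnWith.of_dist_le_mul fun x hx y hy => ?_
  rcases le_total x y with hxy | hyx
  · exact key x hx y hy hxy
  · rw [dist_comm, dist_comm x]
    exact key y hy x hx hyx

theorem IsCompact.exists_lipschitzOnWith_smul {X E : Type*} [PseudoMetricSpace X]
    [SeminormedAddCommGroup E] [NormedSpace ℝ E] {s : Set X} (hs : IsCompact s)
    {c : X → ℝ} {g : X → E} {Kc Kg : ℝ≥0} (hc : LipschitzOnWith Kc c s)
    (hg : LipschitzOnWith Kg g s) : ∃ K, LipschitzOnWith K (fun x => c x • g x) s := by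
  obtain ⟨Mc, hMc⟩ := hs.exists_bound_of_continuousOn hc.continuousOn
  obtain ⟨Mg, hMg⟩ := hs.exists_bound_of_continuousOn hg.continuousOn
  refine ⟨_, LipschitzOnWith.of_dist_le' (K := Mc * Kg + Kc * Mg) fun x hx y hy => ?_⟩
  have hMc0 : 0 ≤ Mc := (norm_nonneg _).trans (hMc x hx)
  have hcxy : ‖c x - c y‖ ≤ Kc * dist x y := by
    rw [← dist_eq_norm]; exact hc.dist_le_mul x hx y hy
  have hgxy : ‖g x - g y‖ ≤ Kg * dist x y := by
    rw [← dist_eq_norm]; exact hg.dist_le_mul x hx y hy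
  rw [dist_eq_norm]
  calc ‖c x • g x - c y • g y‖ = ‖c x • (g x - g y) + (c x - c y) • g y‖ := by
        rw [smul_sub, sub_smul]; abel_nf
    _ ≤ ‖c x‖ * ‖g x - g y‖ + ‖c x - c y‖ * ‖g y‖ := by
        refine (norm_add_le _ _).trans ?_
        rw [norm_smul, norm_smul]
    _ ≤ Mc * (Kg * dist x y) + Kc * dist x y * Mg :=
        add_le_add (mul_le_mul (hMc x hx) hgxy (norm_nonneg _) hMc0)
          (mul_le_mul hcxy (hMg y hy) (norm_nonneg _) (by positivity))
    _ = (Mc * Kg + Kc * Mg) * dist x y := by ring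

theorem MemLipAlpha.exists_lipschitzOnWith_Icc {Ω : Type*} [TopologicalSpace Ω] [CompactSpace Ω]
    {α : ℝ} {φ : ℝ → C(Ω, ℝ)} (hφ : MemLipAlpha α φ) (a : ℝ) :
    ∃ K, LipschitzOnWith K φ (Icc a 0) := by
  obtain ⟨-, -, Lφ, hLφ⟩ := hφ
  have hexp : ContDiffOn ℝ 1 (fun t => Real.exp (α * |t|)) (Icc a 0) :=
    (by fun_prop : ContDiff ℝ 1 fun t : ℝ => Real.exp (-(α * t))).contDiffOn.congr
      fun t ht => by rw [abs_of_nonpos ht.2, mul_neg]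
  obtain ⟨Ke, hKe⟩ := hexp.exists_lipschitzOnWith one_ne_zero (convex_Icc a 0) isCompact_Icc
  obtain ⟨K, hK⟩ := isCompact_Icc.exists_lipschitzOnWith_smul hKe
    (hLφ.mono fun t ht => ht.2)
  refine ⟨K, fun s hs t ht => ?_⟩
  have hφ_eq : ∀ u, φ u = Real.exp (α * |u|) • weightedHist α φ u := fun u => by
    rw [weightedHist, smul_smul, ← Real.exp_add, add_neg_cancel, Real.exp_zero, one_smul]
  rw [hφ_eq s, hφ_eq t]
  exact hK hs ht

theorem ContinuousMap.intervalIntegral_apply {Y E : Type*} [TopologicalSpace Y] [CompactSpace Y]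
    [NormedAddCommGroup E] [NormedSpace ℝ E] [CompleteSpace E] {G : ℝ → C(Y, E)} {a b : ℝ}
    (hG : IntervalIntegrable G volume a b) (y : Y) :
    (∫ l in a..b, G l) y = ∫ l in a..b, G l y :=
  ((ContinuousMap.evalCLM ℝ y).intervalIntegral_comp_comm hG).symm

theorem lipschitzOnWith_of_eq_add_integral {E : Type*} [NormedAddCommGroup E] [NormedSpace ℝ E]
    {A G : ℝ → E} {a₀ : E} {r : ℝ} {K : ℝ≥0} (hG : ContinuousOn G (Icc 0 r))
    (hGK : ∀ l ∈ Icc 0 r, ‖G l‖ ≤ K) (hA : ∀ t ∈ Icc 0 r, A t = a₀ + ∫ l in 0..t, G l) :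
    LipschitzOnWith K A (Icc 0 r) := by
  refine LipschitzOnWith.of_dist_le_mul fun t ht s hs => ?_
  have hint : ∀ u ∈ Icc 0 r, IntervalIntegrable G volume 0 u := fun u hu =>
    (hG.mono (uIcc_subset_Icc (left_mem_Icc.2 (hu.1.trans hu.2)) hu)).intervalIntegrable
  rw [dist_eq_norm, Real.dist_eq, hA t ht, hA s hs, add_sub_add_left_eq_sub,
    integral_interval_sub_left (hint t ht) (hint s hs)]
  refine norm_integral_le_of_norm_le_const fun l hl => hGK l ?_
  exact uIcc_subset_Icc hs ht (uIoc_subset_uIcc hl)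

theorem IsCompact.exists_pos_le_apply {X Y : Type*} [TopologicalSpace X] [TopologicalSpace Y]
    [CompactSpace Y] {s : Set X} (hs : IsCompact s) {g : X → C(Y, ℝ)} (hg : ContinuousOn g s)
    (hpos : ∀ z ∈ s, ∀ y, 0 < g z y) : ∃ m, 0 < m ∧ ∀ z ∈ s, ∀ y, m ≤ g z y := by
  obtain ⟨m, hm, hmg⟩ := (hs.prod isCompact_univ).exists_forall_le'
    (f := fun p : X × Y => g p.1 p.2)
    ((hg.comp continuousOn_fst fun p hp => hp.1).eval continuousOn_snd)
    fun p hp => hpos p.1 hp.1 p.2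
  exact ⟨m, hm, fun z hz y => hmg (z, y) ⟨hz, mem_univ y⟩⟩

theorem mul_abs_sub_le_abs_integral {g : ℝ → ℝ} {a b m : ℝ} (hg : ContinuousOn g (uIcc a b))
    (hm : ∀ s ∈ uIcc a b, m ≤ g s) : m * |b - a| ≤ |∫ s in a..b, g s| := by
  wlog hab : a ≤ b generalizing a b
  · rw [abs_sub_comm, integral_symm, abs_neg]
    exact this (uIcc_comm a b ▸ hg) (uIcc_comm a b ▸ hm) (le_of_not_ge hab)
  rw [uIcc_of_le hab] at hg hm
  calc m * |b - a| = ∫ _ in a..b, m := by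
        rw [intervalIntegral.integral_const, smul_eq_mul, abs_of_nonneg (sub_nonneg.2 hab),
          mul_comm]
    _ ≤ ∫ s in a..b, g s :=
        integral_mono_on hab intervalIntegrable_const
          (ContinuousOn.intervalIntegrable_of_Icc hab hg) hm
    _ ≤ |∫ s in a..b, g s| := le_abs_self _

theorem mul_abs_sub_le_of_integral_eq {g₁ g₂ : ℝ → ℝ} {a b t m ε : ℝ}
    (hg₁ : ContinuousOn g₁ (Iic t)) (hg₂ : ContinuousOn g₂ (Iic t)) (ha : a ≤ t) (hb : b ≤ t)
    (hm : ∀ s ∈ uIcc a b, m ≤ g₁ s) (hε : ∀ s ∈ Icc b t, |g₂ s - g₁ s| ≤ ε)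
    (h : ∫ s in a..t, g₁ s = ∫ s in b..t, g₂ s) : m * |a - b| ≤ ε * (t - b) := by
  have hint : ∀ {g : ℝ → ℝ}, ContinuousOn g (Iic t) → ∀ {u v}, u ≤ t → v ≤ t →
      IntervalIntegrable g volume u v := fun hg u v hu hv =>
    (hg.mono fun s hs => hs.2.trans (max_le hu hv)).intervalIntegrable
  have hab : ∫ s in a..b, g₁ s = ∫ s in b..t, (g₂ s - g₁ s) := by
    rw [integral_sub (hint hg₂ hb le_rfl) (hint hg₁ hb le_rfl), ← h]
    exact eq_sub_of_add_eq (integral_add_adjacent_intervals (hint hg₁ ha hb) (hint hg₁ hb le_rfl))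
  calc m * |a - b| ≤ |∫ s in a..b, g₁ s| := by
        rw [abs_sub_comm]
        exact mul_abs_sub_le_abs_integral
          (hg₁.mono fun s hs => hs.2.trans (max_le ha hb)) hm
    _ ≤ ε * |t - b| := by
        rw [hab, ← Real.norm_eq_abs]
        refine norm_integral_le_of_norm_le_const fun s hs => hε s ?_
        rw [uIoc_of_le hb] at hs
        exact Ioc_subset_Icc_self hs
    _ = ε * (t - b) := by rw [abs_of_nonneg (sub_nonneg.2 hb)]

theorem integral_mul_pow_div_factorial (K C t : ℝ) (k : ℕ) :
    ∫ l in (0 : ℝ)..t, C * (K * (C * l) ^ k / k.factorial) =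
      K * (C * t) ^ (k + 1) / (k + 1).factorial := by
  have hpoly : ∀ l : ℝ,
      C * (K * (C * l) ^ k / k.factorial) = C ^ (k + 1) * K / k.factorial * l ^ k := fun l => by
    rw [mul_pow, pow_succ]; ring
  simp_rw [hpoly]
  rw [intervalIntegral.integral_const_mul, integral_pow, Nat.factorial_succ]
  push_cast
  field_simp
  ring

/-- Gronwall's lemma, with `g l` controlled by the supremum of `d` on `[0, l]` rather than by
`d l`. -/
theorem nonpos_of_le_integral_of_le_mul {d g : ℝ → ℝ} {r C : ℝ} (hd : BddAbove (d '' Icc 0 r))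
    (hg : ContinuousOn g (Icc 0 r)) (hdg : ∀ t ∈ Icc 0 r, d t ≤ ∫ l in 0..t, g l)
    (hgd : ∀ l ∈ Icc 0 r, ∀ B, 0 ≤ B → (∀ s ∈ Icc 0 l, d s ≤ B) → g l ≤ C * B) :
    ∀ t ∈ Icc 0 r, d t ≤ 0 := by
  obtain ⟨K₀, hK₀⟩ := hd
  set K := max K₀ 0
  set C' := max C 0
  have hK : ∀ t ∈ Icc 0 r, d t ≤ K := fun t ht => (hK₀ ⟨t, ht, rfl⟩).trans (le_max_left _ _)
  have hC' : 0 ≤ C' := le_max_right _ _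
  have hbound : ∀ k : ℕ, ∀ t ∈ Icc 0 r, d t ≤ K * (C' * t) ^ k / k.factorial := by
    intro k
    induction k with
    | zero => simpa using hK
    | succ k ih =>
      intro t ht
      have hgl : ∀ l ∈ Icc 0 t, g l ≤ C' * (K * (C' * l) ^ k / k.factorial) := by
        intro l hl
        have hlr : l ∈ Icc 0 r := ⟨hl.1, hl.2.trans ht.2⟩
        have hB : 0 ≤ K * (C' * l) ^ k / k.factorial := by have := hl.1; positivity
        refine (hgd l hlr _ hB fun s hs => (ih s ⟨hs.1, hs.2.trans hlr.2⟩).trans ?_).trans ?_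
        · gcongr
          · exact mul_nonneg hC' hs.1
          · exact hs.2
        · exact mul_le_mul_of_nonneg_right (le_max_left _ _) hB
      calc d t ≤ ∫ l in 0..t, g l := hdg t ht
        _ ≤ ∫ l in 0..t, C' * (K * (C' * l) ^ k / k.factorial) :=
            integral_mono_on ht.1
              (ContinuousOn.intervalIntegrable_of_Icc ht.1 (hg.mono (Icc_subset_Icc le_rfl ht.2)))
              (Continuous.intervalIntegrable (by fun_prop) 0 t) hgl
        _ = K * (C' * t) ^ (k + 1) / (k + 1).factorial := integral_mul_pow_div_factorial K C' t k
  intro t ht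
  have hlim := (FloorSemiring.tendsto_pow_div_factorial_atTop (C' * t)).const_mul K
  rw [mul_zero] at hlim
  exact ge_of_tendsto' hlim fun k => (hbound k t ht).trans_eq (mul_div_assoc _ _ _)

namespace IsSolutionOn

variable {Ω : Type*} [TopologicalSpace Ω] [CompactSpace Ω]
  {F : C(Ω, ℝ) → C(Ω, ℝ) → C(Ω × Ω, ℝ) → C(Ω, ℝ)} {f : C(Ω, ℝ) → C(Ω, ℝ)}
  {φ : ℝ → C(Ω, ℝ)} {τ₀ : C(Ω, ℝ)} {r : ℝ} {A τ A₁ τ₁ A₂ τ₂ : ℝ → C(Ω, ℝ)}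

theorem exists_delay_le (h : IsSolutionOn F f φ τ₀ r A τ) :
    ∃ T, 0 ≤ T ∧ ∀ t ∈ Icc 0 r, ∀ x, τ t x ≤ T := by
  obtain ⟨T, hT⟩ := isCompact_Icc.exists_bound_of_continuousOn h.2.1
  exact ⟨max T 0, le_max_right _ _, fun t ht x =>
    (Real.le_norm_self _).trans
      (((τ t).norm_coe_le_norm x).trans ((hT t ht).trans (le_max_left _ _)))⟩

theorem sub_delay_mem (h : IsSolutionOn F f φ τ₀ r A τ) {T : ℝ}
    (hT : ∀ t ∈ Icc 0 r, ∀ x, τ t x ≤ T) {t : ℝ} (ht : t ∈ Icc 0 r) (x : Ω) :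
    t - τ t x ∈ Icc (-T) t :=
  ⟨by linarith [hT t ht x, ht.1], by linarith [h.2.2.1 t ht x]⟩

theorem continuousOn_delayed (h : IsSolutionOn F f φ τ₀ r A τ) {w : ℝ → C(Ω × Ω, ℝ)}
    (hw : ∀ l ∈ Icc 0 r, ∀ x y, w l (x, y) = A (l - τ l x) y) : ContinuousOn w (Icc 0 r) := by
  obtain ⟨hA, hτ, hτ0, -⟩ := h
  refine continuousOn_of_continuousOn_uncurry
    (ContinuousOn.congr ?_ fun p hp => hw p.1 hp.1 p.2.1 p.2.2)
  have hdelay : ContinuousOn (fun p : ℝ × Ω × Ω => p.1 - τ p.1 p.2.1) (Icc 0 r ×ˢ univ) :=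
    continuousOn_fst.sub ((hτ.comp continuousOn_fst fun p hp => hp.1).eval
      (continuous_fst.comp continuous_snd).continuousOn)
  exact (hA.comp hdelay fun p hp => show _ ≤ r by linarith [hp.1.2, hτ0 p.1 hp.1 p.2.1]).eval
    (continuous_snd.comp continuous_snd).continuousOn

theorem exists_integral_eq (h : IsSolutionOn F f φ τ₀ r A τ) (hF : LipschitzOnBoundedSets F) :
    ∃ w : ℝ → C(Ω × Ω, ℝ), (∀ l ∈ Icc 0 r, ∀ x y, w l (x, y) = A (l - τ l x) y) ∧
      ContinuousOn w (Icc 0 r) ∧ ContinuousOn (fun l => F (A l) (τ l) (w l)) (Icc 0 r) ∧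
      ∀ t ∈ Icc 0 r, A t = φ 0 + ∫ l in 0..t, F (A l) (τ l) (w l) := by
  obtain ⟨w, hw, hAw⟩ := h.2.2.2.2.1
  have hwc := h.continuousOn_delayed hw
  have hG : ContinuousOn (fun l => F (A l) (τ l) (w l)) (Icc 0 r) :=
    hF.continuous.comp_continuousOn ((h.1.mono Icc_subset_Iic_self).prodMk (h.2.1.prodMk hwc))
  refine ⟨w, hw, hwc, hG, fun t ht => ContinuousMap.ext fun x => ?_⟩
  rw [hAw t ht x, ContinuousMap.add_apply, ContinuousMap.intervalIntegral_apply]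
  exact ContinuousOn.intervalIntegrable_of_Icc ht.1 (hG.mono (Icc_subset_Icc le_rfl ht.2))

theorem exists_lipschitzOnWith (h : IsSolutionOn F f φ τ₀ r A τ) (hF : LipschitzOnBoundedSets F)
    {α : ℝ} (hφ : MemLipAlpha α φ) (a : ℝ) : ∃ K, LipschitzOnWith K A (Icc a r) := by
  obtain ⟨w, -, -, hG, hAG⟩ := h.exists_integral_eq hF
  obtain ⟨M, hM⟩ := isCompact_Icc.exists_bound_of_continuousOn hG
  have hpos : LipschitzOnWith M.toNNReal A (Icc 0 r) := lipschitzOnWith_of_eq_add_integral hG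
    (fun l hl => (hM l hl).trans (Real.le_coe_toNNReal M)) hAG
  obtain ⟨Kφ, hKφ⟩ := hφ.exists_lipschitzOnWith_Icc a
  have hneg : LipschitzOnWith Kφ A (Icc a 0) := fun s hs t ht => by
    rw [h.2.2.2.1 s hs.2, h.2.2.2.1 t ht.2]
    exact hKφ hs ht
  exact ⟨max Kφ M.toNNReal,
    (hneg.weaken (le_max_left _ _)).Icc_union_Icc (hpos.weaken (le_max_right _ _))⟩

theorem norm_sub_le_of_forall_Icc (h₁ : IsSolutionOn F f φ τ₀ r A₁ τ₁)
    (h₂ : IsSolutionOn F f φ τ₀ r A₂ τ₂) {B t : ℝ} (hB : 0 ≤ B)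
    (hAB : ∀ s ∈ Icc 0 t, ‖A₁ s - A₂ s‖ ≤ B) {s : ℝ} (hs : s ≤ t) : ‖A₁ s - A₂ s‖ ≤ B := by
  rcases le_total s 0 with hs0 | hs0
  · rwa [h₁.2.2.2.1 s hs0, h₂.2.2.2.1 s hs0, sub_self, norm_zero]
  · exact hAB s ⟨hs0, hs⟩

theorem exists_abs_sub_delay_le (h₁ : IsSolutionOn F f φ τ₀ r A₁ τ₁)
    (h₂ : IsSolutionOn F f φ τ₀ r A₂ τ₂) {Kf : ℝ≥0} (hf : LipschitzWith Kf f)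
    (hf_pos : ∀ ψ x, 0 < f ψ x) :
    ∃ D, 0 ≤ D ∧ ∀ B, 0 ≤ B → ∀ t ∈ Icc 0 r, (∀ s ∈ Icc 0 t, ‖A₁ s - A₂ s‖ ≤ B) →
      ∀ x, |τ₁ t x - τ₂ t x| ≤ D * B := by
  obtain ⟨T₁, hT₁0, hT₁⟩ := h₁.exists_delay_le
  obtain ⟨T₂, -, hT₂⟩ := h₂.exists_delay_le
  have hfA : ∀ {A : ℝ → C(Ω, ℝ)}, ContinuousOn A (Iic r) →
      ContinuousOn (fun s => f (A s)) (Iic r) := fun hA => hf.continuous.comp_continuousOn hA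
  obtain ⟨m, hm, hmf⟩ := isCompact_Icc.exists_pos_le_apply
    ((hfA h₁.1).mono (Icc_subset_Iic_self : Icc (-max T₁ T₂) r ⊆ Iic r)) fun _ _ x => hf_pos _ x
  refine ⟨Kf * max T₁ T₂ / m, by positivity, fun B hB t ht hAB x => ?_⟩
  have ha := h₁.sub_delay_mem (fun t ht x => (hT₁ t ht x).trans (le_max_left T₁ T₂)) ht x
  have hb := h₂.sub_delay_mem (fun t ht x => (hT₂ t ht x).trans (le_max_right T₁ T₂)) ht x
  have hcont : ∀ {A : ℝ → C(Ω, ℝ)}, ContinuousOn A (Iic r) →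
      ContinuousOn (fun s => f (A s) x) (Iic t) := fun hA =>
    ((hfA hA).eval continuousOn_const).mono (Iic_subset_Iic.2 ht.2)
  have hε : ∀ s ∈ Icc (t - τ₂ t x) t, |f (A₂ s) x - f (A₁ s) x| ≤ Kf * B := fun s hs =>
    calc |f (A₂ s) x - f (A₁ s) x| ≤ dist (f (A₂ s)) (f (A₁ s)) := by
          rw [← Real.dist_eq]; exact ContinuousMap.dist_apply_le_dist x
      _ ≤ Kf * dist (A₂ s) (A₁ s) := hf.dist_le_mul _ _
      _ ≤ Kf * B := by
          rw [dist_comm, dist_eq_norm]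
          exact mul_le_mul_of_nonneg_left (h₁.norm_sub_le_of_forall_Icc h₂ hB hAB hs.2) Kf.2
  have key := mul_abs_sub_le_of_integral_eq (hcont h₁.1) (hcont h₂.1) ha.2 hb.2
    (fun s hs =>
      hmf s ⟨(le_min ha.1 hb.1).trans hs.1, hs.2.trans ((max_le ha.2 hb.2).trans ht.2)⟩ x)
    hε ((h₁.2.2.2.2.2 t ht x).trans (h₂.2.2.2.2.2 t ht x).symm)
  rw [div_mul_eq_mul_div, le_div_iff₀ hm]
  calc |τ₁ t x - τ₂ t x| * m = m * |t - τ₁ t x - (t - τ₂ t x)| := by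
        rw [sub_sub_sub_cancel_left, abs_sub_comm, mul_comm]
    _ ≤ Kf * B * (t - (t - τ₂ t x)) := key
    _ ≤ Kf * B * max T₁ T₂ := by
        gcongr
        linarith [hT₂ t ht x, le_max_right T₁ T₂]
    _ = Kf * max T₁ T₂ * B := by ring

theorem exists_abs_sub_delayed_le (h₁ : IsSolutionOn F f φ τ₀ r A₁ τ₁)
    (h₂ : IsSolutionOn F f φ τ₀ r A₂ τ₂) (hF : LipschitzOnBoundedSets F) {α : ℝ}
    (hφ : MemLipAlpha α φ) {Kf : ℝ≥0} (hf : LipschitzWith Kf f) (hf_pos : ∀ ψ x, 0 < f ψ x) :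
    ∃ E, 0 ≤ E ∧ ∀ B, 0 ≤ B → ∀ l ∈ Icc 0 r, (∀ s ∈ Icc 0 l, ‖A₁ s - A₂ s‖ ≤ B) →
      ∀ x y, |A₁ (l - τ₁ l x) y - A₂ (l - τ₂ l x) y| ≤ E * B := by
  obtain ⟨D, hD0, hD⟩ := h₁.exists_abs_sub_delay_le h₂ hf hf_pos
  obtain ⟨T₁, -, hT₁⟩ := h₁.exists_delay_le
  obtain ⟨T₂, -, hT₂⟩ := h₂.exists_delay_le
  obtain ⟨Λ, hΛ⟩ := h₂.exists_lipschitzOnWith hF hφ (-max T₁ T₂)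
  refine ⟨1 + Λ * D, by positivity, fun B hB l hl hAB x y => ?_⟩
  have ha := h₁.sub_delay_mem (fun t ht x => (hT₁ t ht x).trans (le_max_left T₁ T₂)) hl x
  have hb := h₂.sub_delay_mem (fun t ht x => (hT₂ t ht x).trans (le_max_right T₁ T₂)) hl x
  have hdist : dist (l - τ₁ l x) (l - τ₂ l x) = |τ₁ l x - τ₂ l x| := by
    rw [Real.dist_eq, sub_sub_sub_cancel_left, abs_sub_comm]
  calc |A₁ (l - τ₁ l x) y - A₂ (l - τ₂ l x) y|
      ≤ |A₁ (l - τ₁ l x) y - A₂ (l - τ₁ l x) y| + |A₂ (l - τ₁ l x) y - A₂ (l - τ₂ l x) y| :=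
        abs_sub_le _ _ _
    _ ≤ ‖A₁ (l - τ₁ l x) - A₂ (l - τ₁ l x)‖ + dist (A₂ (l - τ₁ l x)) (A₂ (l - τ₂ l x)) := by
        gcongr
        · exact (A₁ (l - τ₁ l x) - A₂ (l - τ₁ l x)).norm_coe_le_norm y
        · rw [← Real.dist_eq]; exact ContinuousMap.dist_apply_le_dist y
    _ ≤ B + Λ * (D * B) := by
        gcongr
        · exact h₁.norm_sub_le_of_forall_Icc h₂ hB hAB ha.2
        · refine (hΛ.dist_le_mul _ ⟨ha.1, ha.2.trans hl.2⟩ _ ⟨hb.1, hb.2.trans hl.2⟩).trans ?_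
          rw [hdist]
          exact mul_le_mul_of_nonneg_left (hD B hB l hl hAB x) Λ.2
    _ = (1 + Λ * D) * B := by ring

theorem exists_norm_sub_integrand_le (h₁ : IsSolutionOn F f φ τ₀ r A₁ τ₁)
    (h₂ : IsSolutionOn F f φ τ₀ r A₂ τ₂) (hF : LipschitzOnBoundedSets F) {α : ℝ}
    (hφ : MemLipAlpha α φ) {Kf : ℝ≥0} (hf : LipschitzWith Kf f) (hf_pos : ∀ ψ x, 0 < f ψ x)
    {w₁ w₂ : ℝ → C(Ω × Ω, ℝ)} (hw₁ : ∀ l ∈ Icc 0 r, ∀ x y, w₁ l (x, y) = A₁ (l - τ₁ l x) y)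
    (hw₂ : ∀ l ∈ Icc 0 r, ∀ x y, w₂ l (x, y) = A₂ (l - τ₂ l x) y)
    (hw₁c : ContinuousOn w₁ (Icc 0 r)) (hw₂c : ContinuousOn w₂ (Icc 0 r)) :
    ∃ C, ∀ l ∈ Icc 0 r, ∀ B, 0 ≤ B → (∀ s ∈ Icc 0 l, ‖A₁ s - A₂ s‖ ≤ B) →
      ‖F (A₁ l) (τ₁ l) (w₁ l) - F (A₂ l) (τ₂ l) (w₂ l)‖ ≤ C * B := by
  obtain ⟨D, hD0, hD⟩ := h₁.exists_abs_sub_delay_le h₂ hf hf_pos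
  obtain ⟨E, hE0, hE⟩ := h₁.exists_abs_sub_delayed_le h₂ hF hφ hf hf_pos
  obtain ⟨M₁, hM₁⟩ := isCompact_Icc.exists_bound_of_continuousOn
    ((h₁.1.mono Icc_subset_Iic_self).prodMk (h₁.2.1.prodMk hw₁c))
  obtain ⟨M₂, hM₂⟩ := isCompact_Icc.exists_bound_of_continuousOn
    ((h₂.1.mono Icc_subset_Iic_self).prodMk (h₂.2.1.prodMk hw₂c))
  obtain ⟨K, hK⟩ := hF.exists_lipschitzOnWith (max M₁ M₂)
  refine ⟨K * (1 + D + E), fun l hl B hB hAB => ?_⟩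
  have hτ : ‖τ₁ l - τ₂ l‖ ≤ D * B :=
    (ContinuousMap.norm_le _ (by positivity)).2 fun x => hD B hB l hl hAB x
  have hw : ‖w₁ l - w₂ l‖ ≤ E * B := (ContinuousMap.norm_le _ (by positivity)).2 fun p => by
    rw [ContinuousMap.sub_apply, hw₁ l hl p.1 p.2, hw₂ l hl p.1 p.2]
    exact hE B hB l hl hAB p.1 p.2
  have hΔ : ‖(A₁ l, τ₁ l, w₁ l) - (A₂ l, τ₂ l, w₂ l)‖ ≤ (1 + D + E) * B := by
    have hDB : 0 ≤ D * B := by positivity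
    have hEB : 0 ≤ E * B := by positivity
    simp only [Prod.mk_sub_mk, norm_prod_le_iff]
    exact ⟨by linarith [hAB l ⟨hl.1, le_rfl⟩], by linarith, by linarith⟩
  calc ‖F (A₁ l) (τ₁ l) (w₁ l) - F (A₂ l) (τ₂ l) (w₂ l)‖
      ≤ K * dist (A₁ l, τ₁ l, w₁ l) (A₂ l, τ₂ l, w₂ l) := by
        rw [← dist_eq_norm]
        exact hK.dist_le_mul (A₁ l, τ₁ l, w₁ l)
          (mem_closedBall_zero_iff.2 ((hM₁ l hl).trans (le_max_left _ _))) (A₂ l, τ₂ l, w₂ l)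
          (mem_closedBall_zero_iff.2 ((hM₂ l hl).trans (le_max_right _ _)))
    _ ≤ K * ((1 + D + E) * B) := by
        rw [dist_eq_norm]
        exact mul_le_mul_of_nonneg_left hΔ K.2
    _ = K * (1 + D + E) * B := by ring

theorem eqOn_Icc (h₁ : IsSolutionOn F f φ τ₀ r A₁ τ₁) (h₂ : IsSolutionOn F f φ τ₀ r A₂ τ₂)
    (hF : LipschitzOnBoundedSets F) {α : ℝ} (hφ : MemLipAlpha α φ) {Kf : ℝ≥0}
    (hf : LipschitzWith Kf f) (hf_pos : ∀ ψ x, 0 < f ψ x) : EqOn A₁ A₂ (Icc 0 r) := by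
  obtain ⟨w₁, hw₁, hw₁c, hG₁, hA₁⟩ := h₁.exists_integral_eq hF
  obtain ⟨w₂, hw₂, hw₂c, hG₂, hA₂⟩ := h₂.exists_integral_eq hF
  obtain ⟨C, hC⟩ := h₁.exists_norm_sub_integrand_le h₂ hF hφ hf hf_pos hw₁ hw₂ hw₁c hw₂c
  have hdg : ∀ t ∈ Icc 0 r, ‖A₁ t - A₂ t‖ ≤
      ∫ l in 0..t, ‖F (A₁ l) (τ₁ l) (w₁ l) - F (A₂ l) (τ₂ l) (w₂ l)‖ := fun t ht => by
    have hint : ∀ {G : ℝ → C(Ω, ℝ)}, ContinuousOn G (Icc 0 r) → IntervalIntegrable G volume 0 t :=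
      fun hG => ContinuousOn.intervalIntegrable_of_Icc ht.1 (hG.mono (Icc_subset_Icc le_rfl ht.2))
    rw [hA₁ t ht, hA₂ t ht, add_sub_add_left_eq_sub, ← integral_sub (hint hG₁) (hint hG₂)]
    exact norm_integral_le_integral_norm ht.1
  have hd := nonpos_of_le_integral_of_le_mul
    (isCompact_Icc.bddAbove_image ((h₁.1.sub h₂.1).norm.mono Icc_subset_Iic_self))
    (hG₁.sub hG₂).norm hdg hC
  exact fun t ht => sub_eq_zero.1 (norm_le_zero_iff.1 (hd t ht))

end IsSolutionOn

theorem stmt_12_general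
    {n : ℕ}
    (Ω : Set (EuclideanSpace ℝ (Fin n))) [CompactSpace Ω]
    (f : C(Ω, ℝ) → C(Ω, ℝ)) (Kf : ℝ≥0) (hf_lip : LipschitzWith Kf f)
    (Mbar : ℝ)
    (hf_bdd : ∀ (ψ : C(Ω, ℝ)) (x : Ω), 0 < f ψ x ∧ f ψ x ≤ Mbar)
    (F : C(Ω, ℝ) → C(Ω, ℝ) → C(Ω × Ω, ℝ) → C(Ω, ℝ))
    (hF : LipschitzOnBoundedSets F)
    (α : ℝ)
    (φ : ℝ → C(Ω, ℝ)) (hφ : MemLipAlpha α φ)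
    (τ₀ : C(Ω, ℝ))
    (r : ℝ)
    (A₁ A₂ τ₁ τ₂ : ℝ → C(Ω, ℝ))
    (h₁ : IsSolutionOn F f φ τ₀ r A₁ τ₁)
    (h₂ : IsSolutionOn F f φ τ₀ r A₂ τ₂) :
    ∀ t ∈ Set.Icc (0 : ℝ) r, A₁ t = A₂ t ∧ τ₁ t = τ₂ t := by
  have hf_pos : ∀ ψ x, 0 < f ψ x := fun ψ x => (hf_bdd ψ x).1
  have hA := h₁.eqOn_Icc h₂ hF hφ hf_lip hf_pos
  obtain ⟨D, -, hD⟩ := h₁.exists_abs_sub_delay_le h₂ hf_lip hf_pos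
  refine fun t ht => ⟨hA ht, ContinuousMap.ext fun x => ?_⟩
  have hτ := hD 0 le_rfl t ht
    (fun s hs => by rw [hA ⟨hs.1, hs.2.trans ht.2⟩, sub_self, norm_zero]) x
  rwa [mul_zero, abs_nonpos_iff, sub_eq_zero] at hτ

/-- uniqueness of solutions of system (1.1) on a finite interval [0,r]. -/
theorem stmt_12
    {n : ℕ} (hn : 1 ≤ n)
    (Ω : Set (EuclideanSpace ℝ (Fin n))) (hΩ : IsCompact Ω) [CompactSpace Ω]
    (f : C(Ω, ℝ) → C(Ω, ℝ)) (Kf : ℝ≥0) (hf_lip : LipschitzWith Kf f)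
    (hf_mono : ∀ u v : C(Ω, ℝ), u ≤ v → f v ≤ f u)
    (Mbar : ℝ) (hMbar : 0 < Mbar)
    (hf_bdd : ∀ (ψ : C(Ω, ℝ)) (x : Ω), 0 < f ψ x ∧ f ψ x ≤ Mbar)
    (F : C(Ω, ℝ) → C(Ω, ℝ) → C(Ω × Ω, ℝ) → C(Ω, ℝ))
    (hF : LipschitzOnBoundedSets F)
    (α : ℝ) (hα : 0 ≤ α)
    (φ : ℝ → C(Ω, ℝ)) (hφ : MemLipAlpha α φ)
    (τ₀ : C(Ω, ℝ)) (hτ₀ : ∀ x, 0 ≤ τ₀ x)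
    (r : ℝ) (hr : 0 < r)
    (A₁ A₂ τ₁ τ₂ : ℝ → C(Ω, ℝ))
    (h₁ : IsSolutionOn F f φ τ₀ r A₁ τ₁)
    (h₂ : IsSolutionOn F f φ τ₀ r A₂ τ₂) :
    ∀ t ∈ Set.Icc (0 : ℝ) r, A₁ t = A₂ t ∧ τ₁ t = τ₂ t :=
  stmt_12_general Ω f Kf hf_lip Mbar hf_bdd F hF α φ hφ τ₀ r A₁ A₂ τ₁ τ₂ h₁ h₂
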